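/- Let n ≥ 4 and let L = (n−2)I − A be the Laplacian matrix of the transition digraph of P_{n,3}. Then the product of the n(n−1)−1 nonzero eigenvalues of L equals (n−3)^{(n−1)(n−2)/2} · (n−1)^{n(n−3)/2} · (n(n−2))^{n−1}. -/

import Mathlib

open Polynomial Matrix

/-- Vertices of the transition digraph of `P_{n,3}`: ordered pairs of distinct
elements of `[n]`. -/
abbrev TVtx (n : ℕ) := {p : Fin n × Fin n // p.1 ≠ p.2}

/-- Adjacency matrix (over ℂ) of the transition digraph of `P_{n,3}`. -/
def adjA (n : ℕ) : Matrix (TVtx n) (TVtx n) ℂ :=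
  Matrix.of fun u v => if u.1.2 = v.1.1 ∧ u.1.1 ≠ v.1.2 then 1 else 0

/-- Laplacian matrix `L = (n-2)I - A` of the transition digraph of `P_{n,3}`. -/
def lapL (n : ℕ) : Matrix (TVtx n) (TVtx n) ℂ :=
  ((n : ℂ) - 2) • (1 : Matrix (TVtx n) (TVtx n) ℂ) - adjA n

namespace LapAux

/-- ordered pairs with first coordinate smaller -/
abbrev Pairs (n : ℕ) := {q : Fin n × Fin n // q.1 < q.2}

/-- swap of a vertex -/
def swapV {n : ℕ} (u : TVtx n) : TVtx n := ⟨(u.1.2, u.1.1), Ne.symm u.2⟩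

lemma swapV_swapV {n : ℕ} (u : TVtx n) : swapV (swapV u) = u := rfl

lemma swapV_eq_iff {n : ℕ} (u v : TVtx n) :
    v = swapV u ↔ (v.1.1 = u.1.2 ∧ v.1.2 = u.1.1) := by
  constructor
  · rintro rfl; exact ⟨rfl, rfl⟩
  · rintro ⟨h1, h2⟩
    apply Subtype.ext
    apply Prod.ext h1 h2

/-- `Pairs n` is equivalent to a sigma type. -/
def pairsEquiv (n : ℕ) : Pairs n ≃ Σ i : Fin n, Fin i.1 where
  toFun q := ⟨q.1.2, ⟨q.1.1.1, q.2⟩⟩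
  invFun x := ⟨(⟨x.2.1, lt_trans x.2.2 x.1.2⟩, x.1), x.2.2⟩
  left_inv q := rfl
  right_inv x := rfl

lemma card_pairs (n : ℕ) : Fintype.card (Pairs n) * 2 = n * (n - 1) := by
  rw [Fintype.card_congr (pairsEquiv n), Fintype.card_sigma]
  simp only [Fintype.card_fin]
  rw [Fin.sum_univ_eq_sum_range (fun i => i) n]
  exact Finset.sum_range_id_mul_two n

/-- the block equivalence -/
def eEquiv (n : ℕ) : Fin 2 × Pairs n ≃ TVtx n where
  toFun x := if x.1 = 0 then ⟨x.2.1, ne_of_lt x.2.2⟩ else ⟨(x.2.1.2, x.2.1.1), (ne_of_lt x.2.2).symm⟩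
  invFun u := if h : u.1.1 < u.1.2 then (0, ⟨u.1, h⟩)
    else (1, ⟨(u.1.2, u.1.1), lt_of_le_of_ne (le_of_not_gt h) (Ne.symm u.2)⟩)
  left_inv := by
    rintro ⟨s, q⟩
    fin_cases s
    · simp [q.2]
    · simp [asymm q.2]
  right_inv := by
    rintro ⟨⟨a, b⟩, hab⟩
    by_cases h : a < b
    · simp [h]
    · simp [h]


section Matrices

variable {F : Type} [Field F] (n : ℕ) (c : F)

/-- permutation matrix of the swap involution -/
def Smat : Matrix (TVtx n) (TVtx n) F :=
  Matrix.of fun u v => if v = swapV u then 1 else 0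

def Mmat : Matrix (TVtx n) (TVtx n) F := c • (1 : Matrix (TVtx n) (TVtx n) F) - Smat n

def M'mat : Matrix (TVtx n) (TVtx n) F := c • (1 : Matrix (TVtx n) (TVtx n) F) + Smat n

def Pmat : Matrix (TVtx n) (Fin n) F := Matrix.of fun u i => if u.1.2 = i then 1 else 0

def Qmat : Matrix (Fin n) (TVtx n) F := Matrix.of fun i v => if v.1.1 = i then 1 else 0

lemma Smat_mul_Smat : Smat n * Smat n = (1 : Matrix (TVtx n) (TVtx n) F) := by
  ext u v
  simp only [Matrix.mul_apply, Smat, Matrix.of_apply, ite_mul, one_mul, zero_mul]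
  rw [Finset.sum_ite_eq' Finset.univ (swapV u) (fun w => if v = swapV w then (1:F) else 0)]
  simp [swapV_swapV, Matrix.one_apply, eq_comm]

lemma Mmat_mul_M'mat : Mmat n c * M'mat n c = (c * c - 1) • (1 : Matrix (TVtx n) (TVtx n) F) := by
  rw [Mmat, M'mat, Matrix.sub_mul, Matrix.mul_add, Matrix.mul_add, Matrix.smul_mul,
    Matrix.smul_mul, Matrix.one_mul, Matrix.mul_smul, Smat_mul_Smat, sub_smul, smul_smul]
  rw [Matrix.mul_one, Matrix.one_mul, one_smul]
  abel

lemma PQ_apply (u v : TVtx n) :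
    (Pmat (F := F) n * Qmat (F := F) n : Matrix (TVtx n) (TVtx n) F) u v = if u.1.2 = v.1.1 then 1 else 0 := by
  simp only [Matrix.mul_apply, Pmat, Qmat, Matrix.of_apply, ite_mul, one_mul, zero_mul]
  rw [Finset.sum_ite_eq Finset.univ u.1.2 (fun i => if v.1.1 = i then (1:F) else 0)]
  simp [eq_comm]

lemma Mmat_apply (u v : TVtx n) :
    Mmat n c u v = (if u = v then c else 0) - (if v = swapV u then 1 else 0) := by
  simp [Mmat, Smat, Matrix.one_apply, Matrix.sub_apply, mul_ite]

/-- swap on block indices -/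
def swapIdx (i : Fin 2) : Fin 2 := if i = 0 then 1 else 0

lemma swapV_eEquiv (i : Fin 2) (q : Pairs n) :
    swapV (eEquiv n (i, q)) = eEquiv n (swapIdx i, q) := by
  by_cases h : i = 0
  · subst h; rfl
  · have h1 : i = 1 := by
      rw [Fin.ext_iff]; rw [Fin.ext_iff] at h; have := i.isLt; simp at h ⊢; omega
    subst h1; rfl

lemma Mmat_submatrix :
    (Mmat n c).submatrix (eEquiv n) (eEquiv n) =
      Matrix.blockDiagonal (fun _ : Pairs n => !![c, -1; -1, c]) := by
  ext ⟨i, q⟩ ⟨j, r⟩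
  simp only [Matrix.submatrix_apply, Matrix.blockDiagonal_apply, Mmat_apply]
  by_cases hqr : q = r
  · subst hqr
    have h1 : (eEquiv n (i, q) = eEquiv n (j, q)) ↔ i = j := by
      rw [(eEquiv n).apply_eq_iff_eq]
      constructor
      · intro h; exact (Prod.ext_iff.mp h).1
      · rintro rfl; rfl
    have h2 : (eEquiv n (j, q) = swapV (eEquiv n (i, q))) ↔ j = swapIdx i := by
      rw [swapV_eEquiv, (eEquiv n).apply_eq_iff_eq]
      constructor
      · intro h; exact (Prod.ext_iff.mp h).1
      · rintro rfl; rfl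
    simp only [h1, h2, if_pos rfl]
    fin_cases i <;> fin_cases j <;> simp [swapIdx] <;> norm_num
  · have h1 : ¬ (eEquiv n (i, q) = eEquiv n (j, r)) := fun h => hqr (by
      have := (eEquiv n).injective h
      exact (Prod.ext_iff.mp this).2)
    have h2 : ¬ (eEquiv n (j, r) = swapV (eEquiv n (i, q))) := fun h => hqr (by
      rw [swapV_eEquiv] at h
      have := (eEquiv n).injective h
      exact ((Prod.ext_iff.mp this).2).symm)
    rw [if_neg h1, if_neg h2, if_neg hqr, sub_zero]

lemma det_Mmat : (Mmat n c).det = (c * c - 1) ^ Fintype.card (Pairs n) := by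
  rw [← Matrix.det_submatrix_equiv_self (eEquiv n), Mmat_submatrix, Matrix.det_blockDiagonal]
  simp [Matrix.det_fin_two_of]

lemma det_smul_one_add_smul_J {m : Type} [Fintype m] [DecidableEq m]
    (hm : 0 < Fintype.card m) (a b : F) (ha : a ≠ 0) :
    (a • (1 : Matrix m m F) + b • Matrix.of (fun _ _ => (1:F))).det =
      a ^ (Fintype.card m - 1) * (a + Fintype.card m * b) := by
  have key : a • (1 : Matrix m m F) + b • Matrix.of (fun _ _ => (1:F)) =
      a • ((1 : Matrix m m F) + Matrix.replicateCol Unit (fun _ : m => a⁻¹ * b) * Matrix.replicateRow Unit (fun _ : m => (1:F))) := by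
    rw [smul_add]
    congr 1
    ext i j
    simp only [Matrix.smul_apply, Matrix.mul_apply, Matrix.replicateCol_apply, Matrix.replicateRow_apply,
      Matrix.of_apply, Finset.univ_unique, Finset.sum_singleton, mul_one, smul_eq_mul]
    field_simp
  rw [key, Matrix.det_smul, Matrix.det_one_add_replicateCol_mul_replicateRow]
  have hdot : (fun _ : m => (1:F)) ⬝ᵥ (fun _ => a⁻¹ * b) = (Fintype.card m : F) * (a⁻¹ * b) := by
    simp [dotProduct, Finset.sum_const, nsmul_eq_mul]
  rw [hdot]
  obtain ⟨k, hk⟩ : ∃ k, Fintype.card m = k + 1 := ⟨Fintype.card m - 1, by omega⟩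
  rw [hk]
  simp only [Nat.add_sub_cancel]
  field_simp
  ring

lemma M'mat_apply (u v : TVtx n) :
    M'mat n c u v = (if u = v then c else 0) + (if v = swapV u then 1 else 0) := by
  simp [M'mat, Smat, Matrix.one_apply, Matrix.add_apply, mul_ite]

lemma M'P_apply (u : TVtx n) (j : Fin n) :
    (M'mat n c * Pmat (F := F) n : Matrix (TVtx n) (Fin n) F) u j
      = c * (if u.1.2 = j then 1 else 0) + (if u.1.1 = j then 1 else 0) := by
  rw [Matrix.mul_apply]
  simp only [M'mat_apply, add_mul, ite_mul, one_mul, zero_mul]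
  rw [Finset.sum_add_distrib]
  congr 1
  · rw [Finset.sum_ite_eq Finset.univ u
      (fun v => c * (Pmat n : Matrix (TVtx n) (Fin n) F) v j)]
    simp [Pmat]
  · rw [Finset.sum_ite_eq' Finset.univ (swapV u)
      (fun v => (Pmat n : Matrix (TVtx n) (Fin n) F) v j)]
    simp [Pmat, swapV]

/-- counting vertices with fixed first coordinate -/
def fstFiberEquiv (i : Fin n) : {u : TVtx n // u.1.1 = i} ≃ {b : Fin n // b ≠ i} where
  toFun u := ⟨u.1.1.2, fun hh => u.1.2 (u.2.trans hh.symm)⟩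
  invFun b := ⟨⟨(i, b.1), Ne.symm b.2⟩, rfl⟩
  left_inv u := by
    apply Subtype.ext; apply Subtype.ext
    exact Prod.ext u.2.symm rfl
  right_inv b := rfl

lemma card_fstFiber (i : Fin n) : Fintype.card {u : TVtx n // u.1.1 = i} = n - 1 := by
  rw [Fintype.card_congr (fstFiberEquiv n i)]
  have : Fintype.card {b : Fin n // b ≠ i} = Fintype.card (Fin n) - Fintype.card {b : Fin n // b = i} :=
    Fintype.card_subtype_compl _
  rw [this, Fintype.card_subtype_eq, Fintype.card_fin]

lemma sum_S1 (i j : Fin n) :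
    (∑ u : TVtx n, ((if u.1.1 = i then (1:F) else 0) * (if u.1.2 = j then 1 else 0)))
      = if i = j then 0 else 1 := by
  by_cases h : i = j
  · subst h
    rw [if_pos rfl]
    apply Finset.sum_eq_zero
    intro u _
    split_ifs with h1 h2
    · exact absurd (h1.trans h2.symm) u.2
    all_goals simp
  · rw [if_neg h]
    rw [Finset.sum_eq_single (⟨(i, j), h⟩ : TVtx n)]
    · simp
    · intro b _ hb
      split_ifs with h1 h2
      · exact absurd (Subtype.ext (Prod.ext h1 h2)) hb
      all_goals simp
    · intro hm; exact absurd (Finset.mem_univ _) hm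

lemma sum_S2 (i j : Fin n) :
    (∑ u : TVtx n, ((if u.1.1 = i then (1:F) else 0) * (if u.1.1 = j then 1 else 0)))
      = if i = j then (n:F) - 1 else 0 := by
  by_cases h : i = j
  · subst h
    rw [if_pos rfl]
    have : ∀ u : TVtx n, ((if u.1.1 = i then (1:F) else 0) * (if u.1.1 = i then 1 else 0))
        = if u.1.1 = i then (1:F) else 0 := by
      intro u; split_ifs <;> simp
    simp only [this]
    rw [Finset.sum_boole]
    rw [← Fintype.card_subtype, card_fstFiber]
    have hn1 : 1 ≤ n := i.pos
    push_cast [Nat.cast_sub hn1]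
    ring
  · rw [if_neg h]
    apply Finset.sum_eq_zero
    intro u _
    split_ifs with h1 h2
    · exact absurd (h1.symm.trans h2) h
    all_goals simp

lemma QM'P_apply (i j : Fin n) :
    (Qmat (F := F) n * (M'mat n c * Pmat (F := F) n) : Matrix (Fin n) (Fin n) F) i j
      = if i = j then (n:F) - 1 else c := by
  have expand : ∀ u : TVtx n, (Qmat n : Matrix (Fin n) (TVtx n) F) i u
      * (M'mat n c * Pmat (F := F) n : Matrix (TVtx n) (Fin n) F) u j
      = c * ((if u.1.1 = i then (1:F) else 0) * (if u.1.2 = j then 1 else 0))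
        + ((if u.1.1 = i then (1:F) else 0) * (if u.1.1 = j then 1 else 0)) := by
    intro u; rw [M'P_apply]; simp only [Qmat, Matrix.of_apply]; ring
  rw [Matrix.mul_apply]
  simp only [expand]
  rw [Finset.sum_add_distrib, ← Finset.mul_sum, sum_S1, sum_S2]
  by_cases h : i = j <;> simp [h]

lemma det_key (hn : 4 ≤ n) (hd : c * c - 1 ≠ 0) (ha : c * c - c + ((n:F) - 2) ≠ 0) :
    (Mmat n c + Pmat (F := F) n * Qmat (F := F) n).det * (c * c - 1) ^ n =
      (c * c - 1) ^ (Fintype.card (Pairs n)) * (c * c - c + ((n:F) - 2)) ^ (n - 1) *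
        ((c + 1) * (c + ((n:F) - 2))) := by
  have hMM' := Mmat_mul_M'mat n c
  have e1 : Mmat n c * ((c*c-1)⁻¹ • (M'mat n c * (Pmat (F := F) n * Qmat (F := F) n))) = Pmat (F := F) n * Qmat (F := F) n := by
    rw [Matrix.mul_smul, ← Matrix.mul_assoc, hMM', Matrix.smul_mul, Matrix.one_mul,
      smul_smul, inv_mul_cancel₀ hd, one_smul]
  have key : Mmat n c + Pmat (F := F) n * Qmat (F := F) n
      = Mmat n c * (1 + (c*c-1)⁻¹ • (M'mat n c * (Pmat (F := F) n * Qmat (F := F) n))) := by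
    rw [Matrix.mul_add, Matrix.mul_one, e1]
  rw [key, Matrix.det_mul]
  have step2 : ((1 : Matrix (TVtx n) (TVtx n) F)
        + (c*c-1)⁻¹ • (M'mat n c * (Pmat (F := F) n * Qmat (F := F) n))).det
      = ((1 : Matrix (Fin n) (Fin n) F)
        + (c*c-1)⁻¹ • (Qmat (F := F) n * (M'mat n c * Pmat (F := F) n))).det := by
    have h3 : (c*c-1)⁻¹ • (M'mat n c * (Pmat (F := F) n * Qmat (F := F) n))
        = ((c*c-1)⁻¹ • (M'mat n c * Pmat (F := F) n)) * Qmat (F := F) n := by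
      rw [Matrix.smul_mul, Matrix.mul_assoc]
    rw [h3, Matrix.det_one_add_mul_comm, Matrix.mul_smul]
  rw [step2]
  have hform : (1 : Matrix (Fin n) (Fin n) F) + (c*c-1)⁻¹ • (Qmat (F := F) n * (M'mat n c * Pmat (F := F) n))
      = (c*c-1)⁻¹ • ((c * c - c + ((n:F) - 2)) • (1 : Matrix (Fin n) (Fin n) F)
          + c • Matrix.of (fun _ _ => (1:F))) := by
    ext i j
    simp only [Matrix.add_apply, Matrix.smul_apply, Matrix.one_apply, QM'P_apply,
      Matrix.of_apply, smul_eq_mul]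
    by_cases h : i = j
    · simp only [h, if_pos rfl, ↓reduceIte]
      linear_combination -(inv_mul_cancel₀ hd)
    · simp only [if_neg h]
      ring
  rw [hform, Matrix.det_smul, det_smul_one_add_smul_J (by simp; omega) _ _ ha, det_Mmat]
  simp only [Fintype.card_fin]
  have hne : ((c*c-1)⁻¹) ≠ 0 := inv_ne_zero hd
  have hinv : (c*c-1)⁻¹ ^ n * (c*c-1) ^ n = 1 := by rw [← mul_pow, inv_mul_cancel₀ hd, one_pow]
  linear_combination ((c*c-1) ^ Fintype.card (Pairs n) * (c*c-c+((n:F)-2)) ^ (n-1) *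
    (c*c-c+((n:F)-2) + (n:F)*c)) * hinv

end Matrices

section Poly

variable (n : ℕ)

noncomputable def cp : ℂ[X] := X - ((n : ℂ[X]) - 2)
noncomputable def dp : ℂ[X] := cp n * cp n - 1
noncomputable def ap : ℂ[X] := cp n * cp n - cp n + ((n : ℂ[X]) - 2)

lemma cp_sub_one : cp n - 1 = X - C ((n:ℂ) - 1) := by
  simp only [cp, ← C_eq_natCast, map_sub, C_1, map_ofNat]
  ring

lemma cp_add_one : cp n + 1 = X - C ((n:ℂ) - 3) := by
  simp only [cp, ← C_eq_natCast, map_sub, C_1, map_ofNat]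
  ring

lemma cp_add_n2 : cp n + ((n : ℂ[X]) - 2) = X := by
  simp only [cp]; ring

lemma dp_factor : dp n = (X - C ((n:ℂ) - 1)) * (X - C ((n:ℂ) - 3)) := by
  rw [← cp_sub_one, ← cp_add_one, dp]; ring

lemma dp_ne_zero : dp n ≠ 0 := by
  rw [dp_factor]
  exact mul_ne_zero (X_sub_C_ne_zero _) (X_sub_C_ne_zero _)

lemma ap_eq : ap n = X ^ 2 + (C (3 - 2*(n:ℂ)) * X + C ((n:ℂ) * ((n:ℂ) - 2))) := by
  simp only [ap, cp, map_sub, _root_.map_mul, map_add, ← C_eq_natCast, map_ofNat, C_1]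
  push_cast [← C_eq_natCast]
  ring_nf

lemma ap_monic : (ap n).Monic := by
  rw [ap_eq]
  apply monic_X_pow_add
  exact lt_of_le_of_lt degree_linear_le (by norm_num)

lemma ap_ne_zero : ap n ≠ 0 := (ap_monic n).ne_zero

lemma ap_natDegree : (ap n).natDegree = 2 := by
  have : ap n = C 1 * X ^ 2 + C (3 - 2*(n:ℂ)) * X + C ((n:ℂ) * ((n:ℂ) - 2)) := by
    rw [ap_eq, C_1]; ring
  rw [this]
  exact natDegree_quadratic one_ne_zero

lemma ap_coeff_zero : (ap n).coeff 0 = (n:ℂ) * ((n:ℂ) - 2) := by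
  rw [coeff_zero_eq_eval_zero, ap_eq]
  simp

lemma ap_roots_prod : (ap n).roots.prod = (n:ℂ) * ((n:ℂ) - 2) := by
  have h := (IsAlgClosed.splits (ap n)).coeff_zero_eq_prod_roots_of_monic (ap_monic n)
  rw [ap_natDegree, ap_coeff_zero] at h
  simpa using h.symm

end Poly

section Char

noncomputable abbrev phi : ℂ[X] →+* RatFunc ℂ := algebraMap ℂ[X] (RatFunc ℂ)

lemma phi_injective : Function.Injective phi := IsFractionRing.injective ℂ[X] (RatFunc ℂ)

variable (n : ℕ)

lemma swapV_ne_self (u : TVtx n) : u ≠ swapV u := by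
  intro h
  exact u.2 (congrArg (fun w => w.1.1) h)

lemma lapL_diag (u : TVtx n) : lapL n u u = (n:ℂ) - 2 := by
  have hA : adjA n u u = 0 := by
    simp only [adjA, Matrix.of_apply, ite_eq_right_iff, and_imp]
    intro h1
    exact absurd h1.symm u.2
  simp [lapL, Matrix.sub_apply, Matrix.smul_apply, Matrix.one_apply, hA]

lemma lapL_off (u v : TVtx n) (h : u ≠ v) : lapL n u v = - adjA n u v := by
  simp [lapL, Matrix.sub_apply, Matrix.smul_apply, Matrix.one_apply, if_neg h]

lemma charmatrix_map :
    ((Matrix.charmatrix (lapL n)).map phi) =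
      Mmat n (phi (cp n)) + Pmat (F := RatFunc ℂ) n * Qmat (F := RatFunc ℂ) n := by
  ext u v
  rw [Matrix.map_apply, Matrix.add_apply, Mmat_apply, PQ_apply]
  by_cases huv : u = v
  · subst huv
    rw [Matrix.charmatrix_apply_eq, lapL_diag, if_pos rfl,
      if_neg (fun h => swapV_ne_self n u h),
      if_neg (fun h : u.1.2 = u.1.1 => u.2 h.symm)]
    rw [cp]
    push_cast [map_sub, ← C_eq_natCast, map_ofNat]
    ring
  · rw [Matrix.charmatrix_apply_ne _ _ _ huv, lapL_off n u v huv, if_neg huv]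
    simp only [map_neg, neg_neg]
    by_cases h2 : v = swapV u
    · have h1 : u.1.2 = v.1.1 := by rw [h2]; rfl
      have h3 : u.1.1 = v.1.2 := by rw [h2]; rfl
      have hA : adjA n u v = 0 := by
        simp only [adjA, Matrix.of_apply, ite_eq_right_iff, and_imp]
        intro _ hne
        exact absurd h3 hne
      rw [hA, if_pos h2, if_pos h1, map_zero]
      simp
    · rw [if_neg h2]
      by_cases h1 : u.1.2 = v.1.1
      · have hne : u.1.1 ≠ v.1.2 := by
          intro h3
          exact h2 ((swapV_eq_iff u v).mpr ⟨h1.symm, h3.symm⟩)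
        have hA : adjA n u v = 1 := by
          simp only [adjA, Matrix.of_apply]
          rw [if_pos ⟨h1, hne⟩]
        rw [hA, if_pos h1, C_1, _root_.map_one]
        ring
      · have hA : adjA n u v = 0 := by
          simp only [adjA, Matrix.of_apply, ite_eq_right_iff, and_imp]
          intro h
          exact absurd h h1
        rw [hA, if_neg h1, map_zero]
        simp

lemma charpoly_key (hn : 4 ≤ n) :
    (lapL n).charpoly * dp n ^ n =
      dp n ^ (Fintype.card (Pairs n)) * ap n ^ (n - 1) *
        ((cp n + 1) * (cp n + ((n : ℂ[X]) - 2))) := by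
  apply phi_injective
  have hd : phi (cp n) * phi (cp n) - 1 ≠ 0 := by
    rw [← map_one phi, ← _root_.map_mul, ← map_sub]
    exact fun h => dp_ne_zero n (phi_injective (by rw [map_zero]; exact h))
  have ha : phi (cp n) * phi (cp n) - phi (cp n) + ((n : RatFunc ℂ) - 2) ≠ 0 := by
    have : phi (ap n) = phi (cp n) * phi (cp n) - phi (cp n) + ((n : RatFunc ℂ) - 2) := by
      rw [ap]
      push_cast [map_add, map_sub, _root_.map_mul, map_ofNat]
      ring
    rw [← this]
    exact fun h => ap_ne_zero n (phi_injective (by rw [map_zero]; exact h))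
  have hdet := det_key n (phi (cp n)) hn hd ha
  rw [← charmatrix_map] at hdet
  have hmap : phi ((lapL n).charpoly) = ((lapL n).charmatrix.map ⇑phi).det :=
    RingHom.map_det phi _
  rw [← hmap] at hdet
  push_cast [_root_.map_mul, map_pow, map_sub, map_add, _root_.map_one, map_ofNat] at hdet ⊢
  convert hdet using 2 <;>
    push_cast [_root_.map_mul, map_sub, map_add, _root_.map_one, map_ofNat, dp, ap] <;> ring

lemma card_ge (hn : 4 ≤ n) : n ≤ Fintype.card (Pairs n) := by
  have h := card_pairs n
  have h2 : n * 2 ≤ n * (n - 1) := Nat.mul_le_mul_left n (by omega)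
  omega

lemma charpoly_factor (hn : 4 ≤ n) :
    (lapL n).charpoly =
      (X - C ((n:ℂ) - 1)) ^ (Fintype.card (Pairs n) - n) *
        ((X - C ((n:ℂ) - 3)) ^ (Fintype.card (Pairs n) - n + 1) * (ap n ^ (n - 1) * X)) := by
  have hNp := card_ge n hn
  apply mul_right_cancel₀ (pow_ne_zero n (dp_ne_zero n))
  rw [charpoly_key n hn, cp_add_one, cp_add_n2, dp_factor]
  obtain ⟨m, hm⟩ : ∃ m, Fintype.card (Pairs n) = m + n := ⟨Fintype.card (Pairs n) - n, by omega⟩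
  rw [hm, Nat.add_sub_cancel]
  simp only [mul_pow, pow_add]
  ring

lemma exponents (hn : 4 ≤ n) :
    Fintype.card (Pairs n) - n = n * (n - 3) / 2 ∧
      Fintype.card (Pairs n) - n + 1 = (n - 1) * (n - 2) / 2 := by
  obtain ⟨a, rfl⟩ : ∃ a, n = a + 4 := ⟨n - 4, by omega⟩
  have hc := card_pairs (a + 4)
  have h1 : a + 4 - 1 = a + 3 := rfl
  have h2 : a + 4 - 2 = a + 2 := rfl
  have h3 : a + 4 - 3 = a + 1 := rfl
  rw [h1] at hc
  rw [h3, h1, h2]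
  have e1 : (a+4)*(a+3) = a*a + 7*a + 12 := by ring
  have e2 : (a+4)*(a+1) = a*a + 5*a + 4 := by ring
  have e3 : (a+3)*(a+2) = a*a + 5*a + 6 := by ring
  rw [e1] at hc
  rw [e2, e3]
  have hNp := card_ge (a+4) (by omega)
  generalize a*a = b at hc ⊢
  omega

end Char

end LapAux

/-- The product of the `n(n-1)-1` nonzero eigenvalues of the Laplacian of the
transition digraph of `P_{n,3}` (all eigenvalues except one eigenvalue `0`)
equals `(n−3)^{(n−1)(n−2)/2} · (n−1)^{n(n−3)/2} · (n(n−2))^{n−1}`. -/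
theorem lap_nonzero_eigen_prod (n : ℕ) (hn : 4 ≤ n) :
    (((lapL n).charpoly.roots.erase 0).prod =
      ((n : ℂ) - 3) ^ ((n - 1) * (n - 2) / 2) * ((n : ℂ) - 1) ^ (n * (n - 3) / 2) *
        ((n : ℂ) * ((n : ℂ) - 2)) ^ (n - 1)) := by
  classical
  open LapAux in
  have hfac := charpoly_factor n hn
  obtain ⟨hexp1, hexp2⟩ := exponents n hn
  set m := Fintype.card (Pairs n) - n with hm
  have h3 : ap n ^ (n-1) * X ≠ 0 :=
    mul_ne_zero (pow_ne_zero _ (ap_ne_zero n)) X_ne_zero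
  have h2 : (X - C ((n:ℂ) - 3)) ^ (m + 1) * (ap n ^ (n-1) * X) ≠ 0 :=
    mul_ne_zero (pow_ne_zero _ (X_sub_C_ne_zero _)) h3
  rw [hfac, Polynomial.roots_mul (mul_ne_zero (pow_ne_zero _ (X_sub_C_ne_zero _)) h2),
    Polynomial.roots_mul h2, Polynomial.roots_mul h3,
    Polynomial.roots_pow, Polynomial.roots_pow, Polynomial.roots_pow,
    Polynomial.roots_X_sub_C, Polynomial.roots_X_sub_C, Polynomial.roots_X]
  have hre : m • ({(n:ℂ) - 1} : Multiset ℂ)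
        + ((m+1) • ({(n:ℂ) - 3} : Multiset ℂ) + ((n-1) • (ap n).roots + {0}))
      = 0 ::ₘ (m • ({(n:ℂ) - 1} : Multiset ℂ)
        + ((m+1) • ({(n:ℂ) - 3} : Multiset ℂ) + (n-1) • (ap n).roots)) := by
    rw [← Multiset.singleton_add]
    abel
  rw [hre, Multiset.erase_cons_head, Multiset.prod_add, Multiset.prod_add,
    Multiset.prod_nsmul, Multiset.prod_nsmul, Multiset.prod_nsmul,
    Multiset.prod_singleton, Multiset.prod_singleton, ap_roots_prod]
  rw [← hexp1, ← hexp2]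
  ring
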